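/- arXiv:1602.03722 — 3 statements merged into one kernel-verified Lean document; each statement's English description precedes it below -/
import Mathlib

section
/- If there exists a perfect binary sequence of length n, then n is a perfect square (indeed n = (∑_k A(k))², so n is an even square when n > 1). -/
open Finset

/-!
Summing the periodic autocorrelations `R_u` over all shifts gives `(∑ A)²`, because every cyclic
shift of `A` has the same sum. For a perfect `±1` sequence only `R₀ = n` survives, so `n = (∑ A)²`.
When `n > 1`, `R₁ = 0` is a sum of `n` signs, which forces `n` to be even, hence so is `∑ A`.
-/

theorem Finset.sum_range_comp_add_mod {M : Type*} [AddCommMonoid M] (f : ℕ → M) (n k : ℕ) :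
    ∑ u ∈ range n, f ((k + u) % n) = ∑ u ∈ range n, f u := by
  rcases Nat.eq_zero_or_pos n with rfl | hn
  · simp
  have hmaps : Set.MapsTo (fun u ↦ (k + u) % n) (range n) (range n) := fun u _ ↦
    mem_range.2 (Nat.mod_lt _ hn)
  have hinj : Set.InjOn (fun u ↦ (k + u) % n) (range n) := fun u hu v hv huv ↦
    Nat.ModEq.eq_of_lt_of_lt (Nat.ModEq.add_left_cancel' k huv) (mem_range.1 hu) (mem_range.1 hv)
  exact sum_nbij _ hmaps hinj (surjOn_of_injOn_of_card_le _ hmaps hinj le_rfl) fun _ _ ↦ rfl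

theorem Int.even_sum_iff_even_card {ι : Type*} {s : Finset ι} {f : ι → ℤ}
    (hf : ∀ i ∈ s, f i = 1 ∨ f i = -1) : Even (∑ i ∈ s, f i) ↔ Even #s := by
  rw [← Int.even_coe_nat, ← ZMod.intCast_eq_zero_iff_even, ← ZMod.intCast_eq_zero_iff_even]
  have hodd : ∀ i ∈ s, ((f i : ℤ) : ZMod 2) = 1 := fun i hi ↦ by
    rcases hf i hi with h | h <;> simp [h]
  push_cast
  rw [sum_congr rfl hodd]
  simp

section Autocorrelation

variable {R : Type*}

def autocorrelation [Mul R] [AddCommMonoid R] (n : ℕ) (A : ℕ → R) (u : ℕ) : R :=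
  ∑ k ∈ range n, A k * A ((k + u) % n)

theorem sum_autocorrelation [CommSemiring R] (n : ℕ) (A : ℕ → R) :
    ∑ u ∈ range n, autocorrelation n A u = (∑ k ∈ range n, A k) ^ 2 := by
  unfold autocorrelation
  rw [sum_comm, sq, sum_mul]
  refine sum_congr rfl fun k _ ↦ ?_
  rw [← mul_sum, sum_range_comp_add_mod A n k]

theorem autocorrelation_zero [Ring R] {n : ℕ} {A : ℕ → R}
    (hA : ∀ k < n, A k = 1 ∨ A k = -1) : autocorrelation n A 0 = n := by
  have hsq : ∀ k ∈ range n, A k * A ((k + 0) % n) = 1 := fun k hk ↦ by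
    rw [add_zero, Nat.mod_eq_of_lt (mem_range.1 hk)]
    rcases hA k (mem_range.1 hk) with h | h <;> simp [h]
  rw [autocorrelation, sum_congr rfl hsq, sum_const, card_range, nsmul_one]

theorem sq_sum_eq_of_autocorrelation_eq_zero [CommRing R] {n : ℕ} {A : ℕ → R}
    (hA : ∀ k < n, A k = 1 ∨ A k = -1) (hperf : ∀ u, 0 < u → u < n → autocorrelation n A u = 0) :
    (∑ k ∈ range n, A k) ^ 2 = n := by
  rcases Nat.eq_zero_or_pos n with rfl | hn
  · simp
  rw [← sum_autocorrelation, sum_eq_single_of_mem 0 (mem_range.2 hn), autocorrelation_zero hA]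
  exact fun u hu hu0 ↦ hperf u (Nat.pos_of_ne_zero hu0) (mem_range.1 hu)

theorem even_of_autocorrelation_eq_zero {n u : ℕ} {A : ℕ → ℤ} (hn : 0 < n)
    (hA : ∀ k < n, A k = 1 ∨ A k = -1) (hu : autocorrelation n A u = 0) : Even n := by
  have hsign : ∀ k ∈ range n, A k * A ((k + u) % n) = 1 ∨ A k * A ((k + u) % n) = -1 := by
    intro k hk
    rcases hA k (mem_range.1 hk) with h | h <;>
      rcases hA _ (Nat.mod_lt (k + u) hn) with h' | h' <;> simp [h, h']
  have hR : Even (autocorrelation n A u) := hu ▸ Even.zero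
  simpa using (Int.even_sum_iff_even_card hsign).1 hR

end Autocorrelation

theorem perfect_binary_length_square (n : ℕ) (A : ℕ → ℤ)
    (hA : ∀ k < n, A k = 1 ∨ A k = -1)
    (hperf : ∀ u, 0 < u → u < n →
      (∑ k ∈ Finset.range n, A k * A ((k + u) % n)) = 0) :
    (n : ℤ) = (∑ k ∈ Finset.range n, A k) ^ 2 ∧
      (1 < n → Even (∑ k ∈ Finset.range n, A k)) := by
  have hsq := sq_sum_eq_of_autocorrelation_eq_zero hA hperf
  refine ⟨hsq.symm, fun hn ↦ ?_⟩
  have heven : Even n := even_of_autocorrelation_eq_zero (by omega) hA (hperf 1 one_pos hn)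
  rw [← Int.even_coe_nat, ← hsq] at heven
  exact (Int.even_pow.1 heven).1
end

section
/- A balanced binary sequence of length n > 1 with n ≡ 0 (mod 4) cannot be optimal: if |∑_{k=0}^{n-1} A(k)| ≤ 1 and n ≡ 0 (mod 4), then there exists u with 0 < u < n and R_u(A) ≠ 0. -/
/-!
Summing the periodic autocorrelations over all shifts `u` gives `(∑ A)²`. A balanced `±1`
sequence of even length has `∑ A = 0`, whereas `R_0 = n > 0`, so some `R_u` with `0 < u < n`
must be nonzero.
-/

open Finset

theorem Finset.sum_range_add_one_mod {M : Type*} [AddCommMonoid M] (n : ℕ) (f : ℕ → M) :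
    ∑ u ∈ range n, f ((u + 1) % n) = ∑ u ∈ range n, f u := by
  rcases n with _ | n
  · rfl
  rw [sum_range_succ, Nat.mod_self, sum_range_succ' f]
  congr 1
  exact sum_congr rfl fun u hu => by rw [Nat.mod_eq_of_lt (by simpa using hu)]

theorem Finset.sum_range_add_mod {M : Type*} [AddCommMonoid M] (n k : ℕ) (f : ℕ → M) :
    ∑ u ∈ range n, f ((k + u) % n) = ∑ u ∈ range n, f u := by
  induction k generalizing f with
  | zero => exact sum_congr rfl fun u hu => by rw [zero_add, Nat.mod_eq_of_lt (by simpa using hu)]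
  | succ k ih =>
    calc ∑ u ∈ range n, f ((k + 1 + u) % n)
        = ∑ u ∈ range n, f (((k + u) % n + 1) % n) := by
          simp only [Nat.mod_add_mod, add_right_comm k 1]
      _ = ∑ u ∈ range n, f u := by rw [ih (fun j => f ((j + 1) % n)), sum_range_add_one_mod]

def periodicAutocorr {R : Type*} [Mul R] [AddCommMonoid R] (n : ℕ) (A : ℕ → R) (u : ℕ) : R :=
  ∑ k ∈ range n, A k * A ((k + u) % n)

theorem sum_periodicAutocorr {R : Type*} [NonUnitalNonAssocSemiring R] (n : ℕ) (A : ℕ → R) :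
    ∑ u ∈ range n, periodicAutocorr n A u = (∑ k ∈ range n, A k) * ∑ k ∈ range n, A k := by
  simp only [periodicAutocorr]
  rw [sum_comm, sum_mul]
  exact sum_congr rfl fun k _ => by rw [← mul_sum, sum_range_add_mod]

theorem periodicAutocorr_zero {R : Type*} [NonAssocSemiring R] {n : ℕ} {A : ℕ → R}
    (hA : ∀ k < n, A k * A k = 1) : periodicAutocorr n A 0 = n := by
  calc periodicAutocorr n A 0 = ∑ _k ∈ range n, (1 : R) :=
        sum_congr rfl fun k hk => by
          rw [add_zero, Nat.mod_eq_of_lt (mem_range.1 hk), hA k (mem_range.1 hk)]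
    _ = n := by simp

theorem sum_sign_emod_two {n : ℕ} {A : ℕ → ℤ} (hA : ∀ k < n, A k = 1 ∨ A k = -1) :
    (∑ k ∈ range n, A k) % 2 = n % 2 := by
  rw [sum_int_mod, sum_congr rfl fun k hk => (show A k % 2 = 1 by
    rcases hA k (mem_range.1 hk) with h | h <;> simp [h])]
  simp

theorem sum_eq_zero_of_balanced {n : ℕ} (hn : Even n) {A : ℕ → ℤ}
    (hA : ∀ k < n, A k = 1 ∨ A k = -1) (hbal : |∑ k ∈ range n, A k| ≤ 1) :
    ∑ k ∈ range n, A k = 0 := by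
  have hpar := sum_sign_emod_two hA
  rw [Nat.even_iff] at hn
  rw [abs_le] at hbal
  omega

theorem balanced_not_optimal_zero_mod_four (n : ℕ) (hn : 1 < n) (h4 : n % 4 = 0)
    (A : ℕ → ℤ) (hA : ∀ k < n, A k = 1 ∨ A k = -1)
    (hbal : |∑ k ∈ Finset.range n, A k| ≤ 1) :
    ∃ u, 0 < u ∧ u < n ∧
      (∑ k ∈ Finset.range n, A k * A ((k + u) % n)) ≠ 0 := by
  by_contra! hopt
  have hsum := sum_periodicAutocorr n A
  rw [sum_eq_zero_of_balanced (by rw [Nat.even_iff]; omega) hA hbal, mul_zero,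
    sum_eq_single_of_mem (f := periodicAutocorr n A) 0 (mem_range.2 (by omega))
      fun u hu hu0 => hopt u (Nat.pos_of_ne_zero hu0) (mem_range.1 hu),
    periodicAutocorr_zero fun k hk => by rcases hA k hk with h | h <;> simp [h]] at hsum
  omega
end

section
/- For an odd prime p with p ≡ 1 (mod 4), the nontrivial periodic autocorrelations of the Legendre sequence of length p lie in {1, −3}. -/
open Finset
open scoped Classical

/-!
Write the Legendre sequence as `χ + δ₀`, with `χ` the quadratic character. For `u ≠ 0` the cross
terms contribute `χ u + χ (-u)`, while the substitution `x ↦ -u x` turns `∑ χ x χ (x + u)` into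
`χ (-1) J(χ, χ⁻¹) = -1`. Hence `R_u = χ u + χ (-u) - 1`, and if `p ≡ 1 [MOD 4]` then `χ (-1) = 1`,
so `R_u = 2 χ u - 1 ∈ {1, -3}`.
-/

namespace MulChar

variable {F R : Type*} [Field F] [Fintype F] [CommRing R] [IsDomain R]

theorem sum_mul_inv_add_eq_neg_one {χ : MulChar F R} (hχ : χ ≠ 1) {b : F} (hb : b ≠ 0) :
    ∑ x, χ x * χ⁻¹ (x + b) = -1 := by
  have hscale (y : F) : χ (-b * y) * χ⁻¹ (-b * y + b) = χ (-1) * (χ y * χ⁻¹ (1 - y)) := by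
    have hbb : χ b * χ⁻¹ b = 1 := by rw [inv_apply', ← map_mul, mul_inv_cancel₀ hb, map_one]
    rw [show -b * y + b = b * (1 - y) by ring, show -b * y = -1 * b * y by ring, map_mul, map_mul,
      map_mul]
    linear_combination (χ (-1) * χ y * χ⁻¹ (1 - y)) * hbb
  calc ∑ x, χ x * χ⁻¹ (x + b) = ∑ y, χ (-b * y) * χ⁻¹ (-b * y + b) :=
        (Fintype.sum_bijective _ (mulLeft_bijective₀ (-b) (neg_ne_zero.mpr hb)) _ _
          fun _ ↦ rfl).symm
    _ = χ (-1) * jacobiSum χ χ⁻¹ := by simp only [hscale, jacobiSum, mul_sum]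
    _ = -1 := by
      rw [jacobiSum_nontrivial_inv hχ, mul_neg, ← map_mul, neg_one_mul, neg_neg, map_one]

end MulChar

section QuadraticChar

variable {F : Type*} [Field F] [Fintype F]

theorem ringChar_ne_two_of_card_mod_four_eq_one (hF : Fintype.card F % 4 = 1) :
    ringChar F ≠ 2 := fun h ↦ by
  have := FiniteField.even_card_of_char_two h
  omega

variable [DecidableEq F]

theorem quadraticChar_sum_mul_add_eq_neg_one (hF : ringChar F ≠ 2) {b : F} (hb : b ≠ 0) :
    ∑ x, quadraticChar F x * quadraticChar F (x + b) = -1 := by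
  simpa only [(quadraticChar_isQuadratic F).inv] using
    MulChar.sum_mul_inv_add_eq_neg_one (quadraticChar_ne_one hF) hb

end QuadraticChar

-- `0` is a square, so this also gives the value `1` at `0`.
noncomputable def legendreSequence {F : Type*} [Field F] (x : F) : ℤ :=
  if IsSquare x then 1 else -1

section LegendreSequence

variable {F : Type*} [Field F] [Fintype F] [DecidableEq F]

theorem legendreSequence_eq_quadraticChar_add (x : F) :
    legendreSequence x = quadraticChar F x + if x = 0 then 1 else 0 := by
  by_cases hx : x = 0
  · simp [legendreSequence, hx]
  · rcases quadraticChar_dichotomy hx with h | h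
    · simp [legendreSequence, hx, h, (quadraticChar_one_iff_isSquare hx).mp h]
    · simp [legendreSequence, hx, h, quadraticChar_neg_one_iff_not_isSquare.mp h]

theorem sum_legendreSequence_mul_add (hF : ringChar F ≠ 2) {b : F} (hb : b ≠ 0) :
    ∑ x, legendreSequence x * legendreSequence (x + b) =
      quadraticChar F b + quadraticChar F (-b) - 1 := by
  simp only [legendreSequence_eq_quadraticChar_add, add_mul, mul_add, sum_add_distrib,
    quadraticChar_sum_mul_add_eq_neg_one hF hb, mul_ite, ite_mul, mul_one, one_mul, mul_zero,
    zero_mul, add_eq_zero_iff_eq_neg]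
  simp only [sum_ite_eq', mem_univ, if_true, zero_add, neg_eq_zero, hb, if_false, add_zero]
  ring

theorem sum_legendreSequence_mul_add_of_card_mod_four_eq_one (hF : Fintype.card F % 4 = 1)
    {b : F} (hb : b ≠ 0) :
    ∑ x, legendreSequence x * legendreSequence (x + b) = 1 ∨
      ∑ x, legendreSequence x * legendreSequence (x + b) = -3 := by
  have hF2 := ringChar_ne_two_of_card_mod_four_eq_one hF
  have hneg : quadraticChar F (-b) = quadraticChar F b := by
    rw [neg_eq_neg_one_mul, map_mul, quadraticChar_neg_one hF2, ZMod.χ₄_nat_one_mod_four hF,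
      one_mul]
  rw [sum_legendreSequence_mul_add hF2 hb, hneg]
  rcases quadraticChar_dichotomy hb with h | h <;> rw [h] <;> norm_num

end LegendreSequence

theorem ZMod.sum_range_natCast {M : Type*} [AddCommMonoid M] (n : ℕ) [NeZero n]
    (f : ZMod n → M) :
    ∑ k ∈ range n, f k = ∑ x, f x :=
  sum_nbij' (↑) ZMod.val (fun _ _ ↦ mem_univ _) (fun x _ ↦ mem_range.mpr x.val_lt)
    (fun _ hk ↦ ZMod.val_natCast_of_lt (mem_range.mp hk)) (fun x _ ↦ ZMod.natCast_zmod_val x)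
    fun _ _ ↦ rfl

theorem legendre_autocorrelation_one_mod_four (p : ℕ) (hp : p.Prime) (h1 : p % 4 = 1)
    (u : ℕ) (hu : 0 < u) (hup : u < p) :
    let A : ℕ → ℤ := fun k =>
      if k % p = 0 then 1 else if IsSquare ((k : ZMod p)) then 1 else -1
    (∑ k ∈ Finset.range p, A k * A ((k + u) % p)) = 1 ∨
      (∑ k ∈ Finset.range p, A k * A ((k + u) % p)) = -3 := by
  intro A
  have : Fact p.Prime := ⟨hp⟩
  have hA (k : ℕ) : A k = legendreSequence (k : ZMod p) := by
    by_cases hk : k % p = 0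
    · simp [A, legendreSequence, hk, ← ZMod.natCast_mod k p]
    · simp [A, legendreSequence, hk]
  have hu0 : (u : ZMod p) ≠ 0 := by
    rw [Ne, ZMod.natCast_eq_zero_iff]
    exact fun h ↦ absurd (Nat.le_of_dvd hu h) (not_le.mpr hup)
  have hsum : ∑ k ∈ range p, A k * A ((k + u) % p) =
      ∑ x : ZMod p, legendreSequence x * legendreSequence (x + u) := by
    simp only [hA, ZMod.natCast_mod, Nat.cast_add]
    exact ZMod.sum_range_natCast p fun x ↦ legendreSequence x * legendreSequence (x + u)
  rw [hsum]
  exact sum_legendreSequence_mul_add_of_card_mod_four_eq_one (by rwa [ZMod.card]) hu0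
end
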